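/- arXiv:1902.09639 — 3 statements merged into one kernel-verified Lean document; each statement's English description precedes it below -/
import Mathlib

section
/- Let q ≥ 3 be a real number and φ(y) = |y|^(q−2) y. Then for all y₁ ≠ y₂ in ℝ, |(φ'(y₂) − φ'(y₁))/(y₂ − y₁)| ≤ M · ((φ(y₂) − φ(y₁))/(y₂ − y₁))^γ, where γ = (q−3)/(q−2) and M = (q−2)(q−1)^(1/(q−2)). -/
open MeasureTheory Set Filter

private lemma hasDerivAt_abs_rpow_mul_self {p : ℝ} (hp : 0 ≤ p) (y : ℝ) :
    HasDerivAt (fun y : ℝ => |y| ^ p * y) ((p + 1) * |y| ^ p) y := by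
  rcases eq_or_lt_of_le hp with hp0 | hp0
  · simp only [← hp0, Real.rpow_zero, one_mul, zero_add]
    exact hasDerivAt_id' y
  rcases lt_trichotomy y 0 with hy | hy | hy
  · have h1 : HasDerivAt (fun u : ℝ => u ^ (p + 1)) ((p + 1) * (-y) ^ p) (-y) := by
      have := Real.hasDerivAt_rpow_const (x := -y) (p := p + 1)
        (Or.inl (by linarith : -y ≠ 0))
      simpa using this
    have h2 : HasDerivAt (fun x : ℝ => -x) (-1 : ℝ) y := by
      exact (hasDerivAt_id' y).neg
    have h3 : HasDerivAt (fun x : ℝ => -((-x) ^ (p + 1))) ((p + 1) * (-y) ^ p) y := by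
      have := (h1.comp y h2).neg
      exact this.congr_deriv (by ring)
    have h4 : (fun x : ℝ => |x| ^ p * x) =ᶠ[nhds y] fun x : ℝ => -((-x) ^ (p + 1)) := by
      filter_upwards [Iio_mem_nhds hy] with x hx
      have hx' : (0:ℝ) < -x := by simpa using hx
      rw [abs_of_neg hx, Real.rpow_add_one (ne_of_gt hx')]
      ring
    have := h3.congr_of_eventuallyEq h4
    simpa [abs_of_neg hy] using this
  · subst hy
    rw [hasDerivAt_iff_tendsto_slope]
    have habs : Tendsto (fun x : ℝ => |x| ^ p) (nhds 0) (nhds 0) := by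
      have hc : Continuous fun x : ℝ => |x| ^ p :=
        continuous_abs.rpow_const fun x => Or.inr hp
      have := hc.tendsto 0
      simpa [Real.zero_rpow (ne_of_gt hp0)] using this
    have hgoal : (p + 1) * |(0:ℝ)| ^ p = 0 := by
      simp [Real.zero_rpow (ne_of_gt hp0)]
    rw [hgoal]
    refine (habs.mono_left nhdsWithin_le_nhds).congr' ?_
    filter_upwards [self_mem_nhdsWithin] with x hx
    have hx0 : x ≠ 0 := hx
    simp only [slope_def_field]
    field_simp
    simp [Real.zero_rpow (ne_of_gt hp0)]
  · have h1 : HasDerivAt (fun u : ℝ => u ^ (p + 1)) ((p + 1) * y ^ p) y := by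
      have := Real.hasDerivAt_rpow_const (x := y) (p := p + 1)
        (Or.inl (ne_of_gt hy))
      simpa using this
    have h4 : (fun x : ℝ => |x| ^ p * x) =ᶠ[nhds y] fun x : ℝ => x ^ (p + 1) := by
      filter_upwards [Ioi_mem_nhds hy] with x hx
      have hx' : (0:ℝ) < x := hx
      rw [abs_of_pos hx', Real.rpow_add_one (ne_of_gt hx')]
    have := h1.congr_of_eventuallyEq h4
    simpa [abs_of_pos hy] using this

private lemma key_ineq (q : ℝ) (hq : 3 ≤ q) {a b : ℝ} (hab : a < b) :
    |((q-1) * |b| ^ (q-2) - (q-1) * |a| ^ (q-2)) / (b - a)| ≤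
      (q-2) * (q-1) ^ (1 / (q-2)) *
        ((|b| ^ (q-2) * b - |a| ^ (q-2) * a) / (b - a)) ^ ((q-3) / (q-2)) := by
  have hq2 : (0:ℝ) < q - 2 := by linarith
  have hq1 : (0:ℝ) < q - 1 := by linarith
  have hq3 : (0:ℝ) ≤ q - 3 := by linarith
  have hD : (0:ℝ) < b - a := by linarith
  set θ : ℝ := (q-3)/(q-2) with hθdef
  have hθ0 : 0 ≤ θ := div_nonneg hq3 hq2.le
  have hθ1 : θ ≤ 1 := by
    rw [div_le_one hq2]; linarith
  have hcont2 : Continuous fun y : ℝ => |y| ^ (q-2) :=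
    continuous_abs.rpow_const fun x => Or.inr (by linarith)
  have hcont3 : Continuous fun y : ℝ => |y| ^ (q-3) :=
    continuous_abs.rpow_const fun x => Or.inr hq3
  -- FTC for φ
  have ftc2 : ∫ y in a..b, (q-1) * |y| ^ (q-2) = |b| ^ (q-2) * b - |a| ^ (q-2) * a := by
    have e : q - 2 + 1 = q - 1 := by ring
    have := intervalIntegral.integral_eq_sub_of_hasDerivAt
      (f := fun y : ℝ => |y| ^ (q-2) * y) (f' := fun y : ℝ => (q - 2 + 1) * |y| ^ (q-2))
      (fun x _ => hasDerivAt_abs_rpow_mul_self (by linarith) x)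
      (((continuous_const.mul hcont2)).intervalIntegrable a b)
    simp only [e] at this
    exact this
  have ftc3 : ∫ y in a..b, (q-2) * |y| ^ (q-3) = |b| ^ (q-3) * b - |a| ^ (q-3) * a := by
    have e : q - 3 + 1 = q - 2 := by ring
    have := intervalIntegral.integral_eq_sub_of_hasDerivAt
      (f := fun y : ℝ => |y| ^ (q-3) * y) (f' := fun y : ℝ => (q - 3 + 1) * |y| ^ (q-3))
      (fun x _ => hasDerivAt_abs_rpow_mul_self hq3 x)
      (((continuous_const.mul hcont3)).intervalIntegrable a b)
    simp only [e] at this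
    exact this
  set I2 : ℝ := ∫ y in a..b, |y| ^ (q-2) with hI2def
  set I3 : ℝ := ∫ y in a..b, |y| ^ (q-3) with hI3def
  have hI2e : |b| ^ (q-2) * b - |a| ^ (q-2) * a = (q-1) * I2 := by
    rw [← ftc2, hI2def, intervalIntegral.integral_const_mul]
  have hI3e : |b| ^ (q-3) * b - |a| ^ (q-3) * a = (q-2) * I3 := by
    rw [← ftc3, hI3def, intervalIntegral.integral_const_mul]
  have hI2nn : 0 ≤ I2 :=
    intervalIntegral.integral_nonneg hab.le fun x _ => by positivity
  have hI3nn : 0 ≤ I3 :=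
    intervalIntegral.integral_nonneg hab.le fun x _ => by positivity
  -- pointwise power identity
  have hpt : ∀ y : ℝ, (|y| ^ (q-2)) ^ θ = |y| ^ (q-3) := by
    intro y
    rw [← Real.rpow_mul (abs_nonneg y)]
    congr 1
    rw [hθdef]
    field_simp
  -- Jensen
  have jensen : I3 / (b - a) ≤ (I2 / (b - a)) ^ θ := by
    have hconc : ConcaveOn ℝ (Set.Ici 0) fun x : ℝ => x ^ θ :=
      Real.concaveOn_rpow hθ0 hθ1
    have hgc : ContinuousOn (fun x : ℝ => x ^ θ) (Set.Ici 0) := fun x _ =>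
      (Real.continuousAt_rpow_const x θ (Or.inr hθ0)).continuousWithinAt
    have h0 : volume (Set.Icc a b) ≠ 0 := by
      rw [Real.volume_Icc]
      simp only [ne_eq, ENNReal.ofReal_eq_zero, not_le]
      linarith
    have ht : volume (Set.Icc a b) ≠ ⊤ := measure_Icc_lt_top.ne
    have hfs : ∀ᵐ y ∂volume.restrict (Set.Icc a b), |y| ^ (q-2) ∈ Set.Ici (0:ℝ) :=
      Filter.Eventually.of_forall fun y => Set.mem_Ici.mpr (by positivity)
    have hfi : IntegrableOn (fun y : ℝ => |y| ^ (q-2)) (Set.Icc a b) volume :=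
      hcont2.integrableOn_Icc
    have hgi : IntegrableOn ((fun x : ℝ => x ^ θ) ∘ fun y : ℝ => |y| ^ (q-2))
        (Set.Icc a b) volume := by
      have : ((fun x : ℝ => x ^ θ) ∘ fun y : ℝ => |y| ^ (q-2)) = fun y : ℝ => |y| ^ (q-3) := by
        funext y
        exact hpt y
      rw [this]
      exact hcont3.integrableOn_Icc
    have hJ := hconc.le_map_set_average hgc isClosed_Ici h0 ht hfs hfi hgi
    have havg : ∀ g : ℝ → ℝ, (⨍ y in Set.Icc a b, g y) = (b - a)⁻¹ * ∫ y in a..b, g y := by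
      intro g
      rw [setAverage_eq, Real.volume_real_Icc_of_le hab.le, smul_eq_mul,
        MeasureTheory.integral_Icc_eq_integral_Ioc, ← intervalIntegral.integral_of_le hab.le]
    have e3 : (⨍ y in Set.Icc a b, (|y| ^ (q-2)) ^ θ) = (b - a)⁻¹ * I3 := by
      rw [havg]
      congr 1
      rw [hI3def]
      congr 1
      funext y
      exact hpt y
    have e2 : (⨍ y in Set.Icc a b, |y| ^ (q-2)) = (b - a)⁻¹ * I2 := havg _
    rw [e3, e2] at hJ
    rw [div_eq_inv_mul, div_eq_inv_mul]
    exact hJ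
  -- step 3 : abs difference bounded by signed difference
  have hsplit : ∀ y : ℝ, |y| ^ (q-2) = |y| ^ (q-3) * |y| := by
    intro y
    rcases eq_or_ne y 0 with rfl | hy
    · simp [Real.zero_rpow hq2.ne']
    · rw [← Real.rpow_add_one (abs_ne_zero.mpr hy) (q-3)]
      congr 1
      ring
  have step3 : |(|b| ^ (q-2) - |a| ^ (q-2))| ≤ |b| ^ (q-3) * b - |a| ^ (q-3) * a := by
    rw [hsplit a, hsplit b]
    rcases le_or_gt 0 a with ha | ha
    · have hb : 0 < b := lt_of_le_of_lt ha hab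
      rw [abs_of_nonneg ha, abs_of_pos hb]
      have hmono : a ^ (q-3) ≤ b ^ (q-3) := Real.rpow_le_rpow ha hab.le hq3
      have h1 : 0 ≤ (b ^ (q-3) - a ^ (q-3)) * a := mul_nonneg (by linarith) ha
      have h2 : 0 ≤ b ^ (q-3) * (b - a) :=
        mul_nonneg (Real.rpow_nonneg hb.le _) (by linarith)
      rw [abs_of_nonneg (by nlinarith [h1, h2])]
    · rcases le_or_gt b 0 with hb | hb
      · rw [abs_of_nonpos ha.le, abs_of_nonpos hb]
        have hmono : (-b) ^ (q-3) ≤ (-a) ^ (q-3) :=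
          Real.rpow_le_rpow (by linarith) (by linarith) hq3
        have h1 : 0 ≤ ((-a) ^ (q-3) - (-b) ^ (q-3)) * (-b) :=
          mul_nonneg (by linarith) (by linarith)
        have h2 : 0 ≤ (-a) ^ (q-3) * (b - a) :=
          mul_nonneg (Real.rpow_nonneg (by linarith) _) (by linarith)
        rw [abs_of_nonpos (by nlinarith [h1, h2])]
        nlinarith [h1, h2]
      · rw [abs_of_nonpos ha.le, abs_of_pos hb]
        have hX : 0 ≤ b ^ (q-3) * b :=
          mul_nonneg (Real.rpow_nonneg hb.le _) hb.le
        have hY : 0 ≤ (-a) ^ (q-3) * (-a) :=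
          mul_nonneg (Real.rpow_nonneg (by linarith) _) (by linarith)
        have hYa : (-a) ^ (q-3) * a = -((-a) ^ (q-3) * (-a)) := by ring
        rw [abs_le, hYa]
        constructor <;> linarith
  -- final chain
  rw [hI2e]
  have lhs_eq : |((q-1) * |b| ^ (q-2) - (q-1) * |a| ^ (q-2)) / (b - a)|
      = (q-1) * |(|b| ^ (q-2) - |a| ^ (q-2))| / (b - a) := by
    rw [abs_div, abs_of_pos hD, ← mul_sub, abs_mul, abs_of_pos hq1]
  rw [lhs_eq]
  have hchain1 : (q-1) * |(|b| ^ (q-2) - |a| ^ (q-2))| / (b - a)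
      ≤ (q-1) * (q-2) * (I3 / (b - a)) := by
    rw [hI3e] at step3
    rw [div_le_iff₀ hD]
    calc (q-1) * |(|b| ^ (q-2) - |a| ^ (q-2))|
        ≤ (q-1) * ((q-2) * I3) := by
          apply mul_le_mul_of_nonneg_left step3 hq1.le
      _ = (q-1) * (q-2) * (I3 / (b - a)) * (b - a) := by
          field_simp
  have hchain2 : (q-1) * (q-2) * (I3 / (b - a)) ≤ (q-1) * (q-2) * ((I2 / (b - a)) ^ θ) := by
    apply mul_le_mul_of_nonneg_left jensen
    positivity
  have hrhs : (q-2) * (q-1) ^ (1 / (q-2)) * ((q-1) * I2 / (b - a)) ^ θ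
      = (q-1) * (q-2) * ((I2 / (b - a)) ^ θ) := by
    rw [mul_div_assoc, Real.mul_rpow hq1.le (by positivity),
      ← mul_assoc]
    have : (q-2) * (q-1) ^ (1 / (q-2)) * (q-1) ^ θ = (q-1) * (q-2) := by
      rw [mul_assoc, ← Real.rpow_add hq1]
      have he : 1 / (q-2) + θ = 1 := by
        rw [hθdef]
        field_simp
        ring
      rw [he, Real.rpow_one]
      ring
    rw [this]
  rw [hrhs]
  exact le_trans hchain1 hchain2

theorem stmt_2 (q : ℝ) (hq : 3 ≤ q) (φ : ℝ → ℝ) (hφ : ∀ y, φ y = |y| ^ (q - 2) * y)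
    (y₁ y₂ : ℝ) (h : y₁ ≠ y₂) :
    |(deriv φ y₂ - deriv φ y₁) / (y₂ - y₁)| ≤
      (q - 2) * (q - 1) ^ (1 / (q - 2)) *
        ((φ y₂ - φ y₁) / (y₂ - y₁)) ^ ((q - 3) / (q - 2)) := by
  have hφe : φ = fun y => |y| ^ (q - 2) * y := funext hφ
  have hderiv : ∀ y, deriv φ y = (q - 1) * |y| ^ (q - 2) := by
    intro y
    have e : q - 2 + 1 = q - 1 := by ring
    rw [hφe]
    have := (hasDerivAt_abs_rpow_mul_self (by linarith : (0:ℝ) ≤ q - 2) y).deriv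
    rw [e] at this
    exact this
  rw [hderiv, hderiv, hφ, hφ]
  have flip : ∀ u v x y : ℝ, (u - v) / (x - y) = (v - u) / (y - x) := by
    intro u v x y
    rw [← neg_sub v u, ← neg_sub y x, neg_div_neg_eq]
  rcases h.lt_or_gt with hlt | hlt
  · exact key_ineq q hq hlt
  · have := key_ineq q hq hlt
    rw [flip ((q-1) * |y₂| ^ (q-2)) ((q-1) * |y₁| ^ (q-2)) y₂ y₁,
        flip (|y₂| ^ (q-2) * y₂) (|y₁| ^ (q-2) * y₁) y₂ y₁]
    exact this
end

section
/- Let φ: ℝ → ℝ be continuously differentiable with φ' ≥ 0 and suppose there are constants M ≥ 0 and γ ∈ [0,1) such that |(φ'(y₂) − φ'(y₁))/(y₂ − y₁)| ≤ M ((φ(y₂)−φ(y₁))/(y₂−y₁))^γ for all y₁ ≠ y₂. Then for all y₁ ≠ y₂: |∫₀¹ (φ'(y₁ + t(y₂−y₁)) − φ'(y₁)) dt| ≤ M ((1−γ)/(2−γ))^(1−γ) |y₂ − y₁|^(1−2γ) ((φ(y₂) − φ(y₁))(y₂ − y₁))^γ. -/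
open MeasureTheory intervalIntegral Set Filter
open scoped Topology

/-- Core analytic lemma: if `w ≥ 0` is continuous, `g' = w`, and the pairwise growth
condition holds, then the averaged deviation of `w` from `w 0` is controlled. -/
lemma aux_main (w g : ℝ → ℝ) (hw : Continuous w) (hw0 : ∀ t, 0 ≤ w t)
    (hg : ∀ t, HasDerivAt g (w t) t)
    (m γ : ℝ) (hm : 0 ≤ m) (hγ0 : 0 ≤ γ) (hγ1 : γ < 1)
    (hpair : ∀ x z : ℝ, x < z →
      |w z - w x| ≤ m * (z - x) * ((g z - g x) / (z - x)) ^ γ) :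
    |∫ t in (0:ℝ)..1, (w t - w 0)| ≤
      m * ((1 - γ) / (2 - γ)) ^ (1 - γ) * (∫ t in (0:ℝ)..1, w t) ^ γ := by
  have hwγ : Continuous fun s => w s ^ γ := hw.rpow_const fun s => Or.inr hγ0
  set G : ℝ → ℝ := fun x => ∫ s in (0:ℝ)..x, w s ^ γ with hGdef
  have hGd : ∀ x, HasDerivAt G (w x ^ γ) x := fun x =>
    intervalIntegral.integral_hasDerivAt_right (hwγ.intervalIntegrable 0 x)
      hwγ.stronglyMeasurable.stronglyMeasurableAtFilter hwγ.continuousAt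
  have hGcont : Continuous G := continuous_iff_continuousAt.2 fun x => (hGd x).continuousAt
  -- Slope estimate
  have Hslope : ∀ x r, m * w x ^ γ < r →
      ∀ᶠ z in 𝓝[>] x, |w z - w x| / (z - x) < r := by
    intro x r hr
    have hs : Tendsto (fun z => slope g x z) (𝓝[>] x) (𝓝 (w x)) :=
      (hasDerivAt_iff_tendsto_slope.1 (hg x)).mono_left
        (nhdsWithin_mono x fun z hz => Set.mem_compl_singleton_iff.mpr (ne_of_gt hz))
    have hrp : Tendsto (fun z => m * slope g x z ^ γ) (𝓝[>] x) (𝓝 (m * w x ^ γ)) :=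
      (((Real.continuousAt_rpow_const (w x) γ (Or.inr hγ0)).tendsto).comp hs).const_mul m
    filter_upwards [hrp.eventually_lt_const hr, self_mem_nhdsWithin] with z hz1 hz2
    have hzx : (0:ℝ) < z - x := sub_pos.2 hz2
    have hle : |w z - w x| / (z - x) ≤ m * slope g x z ^ γ := by
      rw [div_le_iff₀ hzx, slope_def_field]
      exact le_of_le_of_eq (hpair x z hz2) (by ring)
    exact lt_of_le_of_lt hle hz1
  -- Upper fence
  have up : ∀ x ∈ Icc (0:ℝ) 1, w x ≤ w 0 + m * G x := by
    intro x hx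
    refine image_le_of_liminf_slope_right_le_deriv_boundary (f := w) (a := 0) (b := 1)
      (B := fun x => w 0 + m * G x) (B' := fun x => m * w x ^ γ)
      hw.continuousOn (by simp [hGdef]) ((continuous_const.add (continuous_const.mul hGcont)).continuousOn)
      (fun x _ => (((hGd x).const_mul m).const_add (w 0)).hasDerivWithinAt) ?_ hx
    intro x hx' r hr
    refine ((Hslope x r hr).and self_mem_nhdsWithin).frequently.mono ?_
    rintro z ⟨hz1, hz2⟩
    have hzx : (0:ℝ) < z - x := sub_pos.2 hz2
    rw [slope_def_field, div_lt_iff₀ hzx]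
    rw [div_lt_iff₀ hzx] at hz1
    have := le_abs_self (w z - w x)
    linarith
  -- Lower fence
  have low : ∀ x ∈ Icc (0:ℝ) 1, -w x ≤ -w 0 + m * G x := by
    intro x hx
    refine image_le_of_liminf_slope_right_le_deriv_boundary (f := fun t => -w t) (a := 0) (b := 1)
      (B := fun x => -w 0 + m * G x) (B' := fun x => m * w x ^ γ)
      hw.neg.continuousOn (by simp [hGdef]) ((continuous_const.add (continuous_const.mul hGcont)).continuousOn)
      (fun x _ => (((hGd x).const_mul m).const_add (-w 0)).hasDerivWithinAt) ?_ hx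
    intro x hx' r hr
    refine ((Hslope x r hr).and self_mem_nhdsWithin).frequently.mono ?_
    rintro z ⟨hz1, hz2⟩
    have hzx : (0:ℝ) < z - x := sub_pos.2 hz2
    rw [slope_def_field, div_lt_iff₀ hzx]
    rw [div_lt_iff₀ hzx] at hz1
    have h1 : w x - w z ≤ |w z - w x| := by
      rw [abs_sub_comm]; exact le_abs_self _
    linarith
  have key1 : ∀ x ∈ Icc (0:ℝ) 1, |w x - w 0| ≤ m * G x := by
    intro x hx
    rw [abs_sub_le_iff]
    exact ⟨by linarith [up x hx], by linarith [low x hx]⟩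
  -- ∫ G = ∫ (1-s) w^γ
  have hswγ : Continuous fun s : ℝ => s * w s ^ γ := continuous_id.mul hwγ
  have key2 : ∫ t in (0:ℝ)..1, G t = ∫ s in (0:ℝ)..1, (1 - s) * w s ^ γ := by
    have hFd : ∀ T : ℝ, HasDerivAt (fun T => T * G T - ∫ s in (0:ℝ)..T, s * w s ^ γ) (G T) T := by
      intro T
      have h1 : HasDerivAt (fun T : ℝ => T * G T) (1 * G T + T * (w T ^ γ)) T :=
        (hasDerivAt_id T).mul (hGd T)
      have h2 : HasDerivAt (fun T : ℝ => ∫ s in (0:ℝ)..T, s * w s ^ γ) (T * w T ^ γ) T :=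
        intervalIntegral.integral_hasDerivAt_right (hswγ.intervalIntegrable 0 T)
          hswγ.stronglyMeasurable.stronglyMeasurableAtFilter hswγ.continuousAt
      have h3 := h1.sub h2
      exact h3.congr_deriv (by ring)
    have e1 := intervalIntegral.integral_eq_sub_of_hasDerivAt (f' := G)
      (fun T _ => hFd T) (hGcont.intervalIntegrable 0 1)
    have e2 : ∫ s in (0:ℝ)..1, (1 - s) * w s ^ γ
        = (∫ s in (0:ℝ)..1, w s ^ γ) - ∫ s in (0:ℝ)..1, s * w s ^ γ := by
      rw [← intervalIntegral.integral_sub (hwγ.intervalIntegrable _ _)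
        (hswγ.intervalIntegrable _ _)]
      congr 1
      funext s
      ring
    rw [e1, e2]
    simp [hGdef]
  -- Hölder step
  have hI0 : 0 ≤ ∫ t in (0:ℝ)..1, w t :=
    intervalIntegral.integral_nonneg zero_le_one fun x _ => hw0 x
  have key3 : ∫ s in (0:ℝ)..1, (1 - s) * w s ^ γ ≤
      ((1 - γ) / (2 - γ)) ^ (1 - γ) * (∫ t in (0:ℝ)..1, w t) ^ γ := by
    rcases eq_or_lt_of_le hγ0 with hγz | hγpos
    · subst hγz
      simp only [Real.rpow_zero, mul_one, sub_zero, Real.rpow_one]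
      have h12 : (∫ s in (0:ℝ)..1, (1 - s)) = 1/2 := by
        rw [integral_comp_sub_left (fun u : ℝ => u) 1]
        norm_num [integral_id]
      linarith [h12]
    · set μ : Measure ℝ := volume.restrict (Set.Ioc (0:ℝ) 1) with hμ
      haveI : IsFiniteMeasure μ := by
        constructor
        rw [hμ, Measure.restrict_apply_univ, Real.volume_Ioc]
        exact ENNReal.ofReal_lt_top
      have hpq : ((1 - γ)⁻¹).HolderConjugate γ⁻¹ :=
        Real.HolderConjugate.one_sub_inv_inv hγpos hγ1
      have hf_nonneg : 0 ≤ᵐ[μ] fun s : ℝ => 1 - s := by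
        rw [hμ]
        refine (ae_restrict_iff' measurableSet_Ioc).2 (Eventually.of_forall fun s hs => ?_)
        simp only [Pi.zero_apply]
        linarith [hs.2]
      have hg_nonneg : 0 ≤ᵐ[μ] fun s : ℝ => w s ^ γ :=
        Eventually.of_forall fun s => Real.rpow_nonneg (hw0 s) γ
      have hmf : MemLp (fun s : ℝ => 1 - s) (ENNReal.ofReal (1 - γ)⁻¹) μ := by
        refine MemLp.of_bound ((continuous_const.sub continuous_id).aestronglyMeasurable) 1 ?_
        rw [hμ]
        refine (ae_restrict_iff' measurableSet_Ioc).2 (Eventually.of_forall fun s hs => ?_)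
        rw [Real.norm_eq_abs, abs_le]
        constructor <;> linarith [hs.1, hs.2]
      have hmg : MemLp (fun s : ℝ => w s ^ γ) (ENNReal.ofReal γ⁻¹) μ := by
        obtain ⟨C, hC⟩ := (isCompact_Icc (a := (0:ℝ)) (b := 1)).exists_bound_of_continuousOn
          hwγ.continuousOn
        refine MemLp.of_bound hwγ.aestronglyMeasurable C ?_
        rw [hμ]
        refine (ae_restrict_iff' measurableSet_Ioc).2 (Eventually.of_forall fun s hs => ?_)
        exact hC s (Set.Ioc_subset_Icc_self hs)
      have holder := MeasureTheory.integral_mul_le_Lp_mul_Lq_of_nonneg hpq hf_nonneg hg_nonneg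
        hmf hmg
      have eL : ∫ s in (0:ℝ)..1, (1 - s) * w s ^ γ = ∫ a, (1 - a) * w a ^ γ ∂μ := by
        rw [intervalIntegral.integral_of_le zero_le_one, hμ]
      have eA : ∫ a, (1 - a) ^ (1 - γ)⁻¹ ∂μ = (1 - γ) / (2 - γ) := by
        have h1 : ∫ a, (1 - a) ^ (1 - γ)⁻¹ ∂μ
            = ∫ s in (0:ℝ)..1, (1 - s) ^ (1 - γ)⁻¹ := by
          rw [intervalIntegral.integral_of_le zero_le_one, hμ]
        have h2 : (∫ s in (0:ℝ)..1, (1 - s) ^ (1 - γ)⁻¹)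
            = ∫ u in (0:ℝ)..1, u ^ (1 - γ)⁻¹ := by
          have := integral_comp_sub_left (a := (0:ℝ)) (b := 1)
            (fun u => u ^ (1 - γ)⁻¹) 1
          simpa using this
        have hp0 : (0:ℝ) < (1 - γ)⁻¹ := by
          apply inv_pos.2; linarith
        have h3 : (∫ u in (0:ℝ)..1, u ^ (1 - γ)⁻¹) = 1 / ((1 - γ)⁻¹ + 1) := by
          rw [integral_rpow (Or.inl (by linarith : (-1:ℝ) < (1 - γ)⁻¹))]
          rw [Real.one_rpow, Real.zero_rpow (by linarith : (1 - γ)⁻¹ + 1 ≠ 0)]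
          ring
        rw [h1, h2, h3]
        have hne : (1:ℝ) - γ ≠ 0 := by linarith
        field_simp
        ring
      have eB : ∫ a, (w a ^ γ) ^ γ⁻¹ ∂μ = ∫ t in (0:ℝ)..1, w t := by
        have : ∀ s : ℝ, (w s ^ γ) ^ γ⁻¹ = w s := fun s => by
          rw [← Real.rpow_mul (hw0 s), mul_inv_cancel₀ hγpos.ne', Real.rpow_one]
        simp only [this]
        rw [intervalIntegral.integral_of_le zero_le_one, hμ]
      rw [eL]
      refine le_trans holder ?_
      rw [eA, eB]
      rw [one_div, one_div, inv_inv, inv_inv]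
  -- Assemble
  calc |∫ t in (0:ℝ)..1, (w t - w 0)|
      ≤ ∫ t in (0:ℝ)..1, |w t - w 0| :=
        intervalIntegral.abs_integral_le_integral_abs zero_le_one
    _ ≤ ∫ t in (0:ℝ)..1, m * G t :=
        intervalIntegral.integral_mono_on zero_le_one
          ((hw.sub continuous_const).abs.intervalIntegrable 0 1)
          ((continuous_const.mul hGcont).intervalIntegrable 0 1) key1
    _ = m * ∫ t in (0:ℝ)..1, G t := intervalIntegral.integral_const_mul m G
    _ = m * ∫ s in (0:ℝ)..1, (1 - s) * w s ^ γ := by rw [key2]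
    _ ≤ m * (((1 - γ) / (2 - γ)) ^ (1 - γ) * (∫ t in (0:ℝ)..1, w t) ^ γ) :=
        mul_le_mul_of_nonneg_left key3 hm
    _ = m * ((1 - γ) / (2 - γ)) ^ (1 - γ) * (∫ t in (0:ℝ)..1, w t) ^ γ := by ring

theorem stmt_4 (φ : ℝ → ℝ) (hφ : ContDiff ℝ 1 φ) (hpos : ∀ y, 0 ≤ deriv φ y)
    (M γ : ℝ) (hM : 0 ≤ M) (hγ : γ ∈ Set.Ico (0 : ℝ) 1)
    (hcond : ∀ y₁ y₂ : ℝ, y₁ ≠ y₂ →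
      |(deriv φ y₂ - deriv φ y₁) / (y₂ - y₁)| ≤ M * ((φ y₂ - φ y₁) / (y₂ - y₁)) ^ γ)
    (y₁ y₂ : ℝ) (h : y₁ ≠ y₂) :
    |∫ t in (0 : ℝ)..1, (deriv φ (y₁ + t * (y₂ - y₁)) - deriv φ y₁)| ≤
      M * ((1 - γ) / (2 - γ)) ^ (1 - γ) * |y₂ - y₁| ^ (1 - 2 * γ) *
        ((φ y₂ - φ y₁) * (y₂ - y₁)) ^ γ := by
  obtain ⟨hγ0, hγ1⟩ := hγ
  set d : ℝ := y₂ - y₁ with hd_def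
  have hd : d ≠ 0 := sub_ne_zero.mpr (Ne.symm h)
  have hdpos : 0 < |d| := abs_pos.mpr hd
  set w : ℝ → ℝ := fun t => deriv φ (y₁ + t * d) with hw_def
  set g : ℝ → ℝ := fun t => φ (y₁ + t * d) / d with hg_def
  have hw : Continuous w := by
    apply (hφ.continuous_deriv le_rfl).comp
    exact continuous_const.add (continuous_id.mul continuous_const)
  have hw0 : ∀ t, 0 ≤ w t := fun t => hpos _
  have hgd : ∀ t, HasDerivAt g (w t) t := by
    intro t
    have h1 : HasDerivAt (fun t : ℝ => y₁ + t * d) d t := by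
      simpa using ((hasDerivAt_id t).mul_const d).const_add y₁
    have h2 : HasDerivAt φ (deriv φ (y₁ + t * d)) (y₁ + t * d) :=
      ((hφ.differentiable one_ne_zero) _).hasDerivAt
    have h3 := (h2.comp t h1).div_const d
    have : deriv φ (y₁ + t * d) * d / d = w t := by
      rw [mul_div_cancel_right₀ _ hd, hw_def]
    rwa [this] at h3
  have hmono : Monotone φ :=
    monotone_of_deriv_nonneg (hφ.differentiable one_ne_zero) hpos
  have hpair : ∀ x z : ℝ, x < z →
      |w z - w x| ≤ (M * |d|) * (z - x) * ((g z - g x) / (z - x)) ^ γ := by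
    intro x z hxz
    have hzx : (0:ℝ) < z - x := sub_pos.2 hxz
    have hne : y₁ + x * d ≠ y₁ + z * d := by
      intro hEq
      apply hd
      have : (z - x) * d = 0 := by linarith [hEq]
      rcases mul_eq_zero.1 this with h' | h'
      · exact absurd h' (ne_of_gt hzx)
      · exact h'
    have hc := hcond (y₁ + x * d) (y₁ + z * d) hne
    have hsub : (y₁ + z * d) - (y₁ + x * d) = (z - x) * d := by ring
    have hQeq : (φ (y₁ + z * d) - φ (y₁ + x * d)) / ((z - x) * d)
        = (g z - g x) / (z - x) := by
      rw [hg_def]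
      show (φ (y₁ + z * d) - φ (y₁ + x * d)) / ((z - x) * d)
        = (φ (y₁ + z * d) / d - φ (y₁ + x * d) / d) / (z - x)
      rw [div_sub_div_same, div_div, mul_comm (z - x) d]
    rw [hsub, abs_div, hQeq] at hc
    have habs : |(z - x) * d| = (z - x) * |d| := by
      rw [abs_mul, abs_of_pos hzx]
    rw [habs] at hc
    have hpos' : (0:ℝ) < (z - x) * |d| := by positivity
    rw [div_le_iff₀ hpos'] at hc
    calc |w z - w x| ≤ M * ((g z - g x) / (z - x)) ^ γ * ((z - x) * |d|) := hc
      _ = (M * |d|) * (z - x) * ((g z - g x) / (z - x)) ^ γ := by ring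
  have main := aux_main w g hw hw0 hgd (M * |d|) γ
    (mul_nonneg hM (abs_nonneg d)) hγ0 hγ1 hpair
  -- rewrite the integrand
  have hw0' : w 0 = deriv φ y₁ := by rw [hw_def]; norm_num
  have hLHS : (∫ t in (0:ℝ)..1, (deriv φ (y₁ + t * d) - deriv φ y₁))
      = ∫ t in (0:ℝ)..1, (w t - w 0) := by
    congr 1
    funext t
    rw [hw0']
  -- FTC : φ y₂ - φ y₁ = d * I
  set I : ℝ := ∫ t in (0:ℝ)..1, w t with hI_def
  have hI0 : 0 ≤ I := intervalIntegral.integral_nonneg zero_le_one fun x _ => hw0 x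
  have hftc : I = g 1 - g 0 :=
    intervalIntegral.integral_eq_sub_of_hasDerivAt (fun t _ => hgd t)
      (hw.intervalIntegrable 0 1)
  have hΔ : φ y₂ - φ y₁ = d * I := by
    rw [hftc, hg_def]
    simp only []
    have h1 : y₁ + 1 * d = y₂ := by rw [hd_def]; ring
    have h0 : y₁ + 0 * d = y₁ := by ring
    rw [h1, h0]
    field_simp
  -- rewrite RHS
  have hrhs : M * ((1 - γ) / (2 - γ)) ^ (1 - γ) * |d| ^ (1 - 2 * γ) * ((φ y₂ - φ y₁) * d) ^ γ
      = (M * |d|) * ((1 - γ) / (2 - γ)) ^ (1 - γ) * I ^ γ := by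
    rw [hΔ]
    have e1 : d * I * d = |d| ^ (2:ℕ) * I := by
      rw [sq_abs]; ring
    rw [e1]
    have e2 : (|d| ^ (2:ℕ) * I) ^ γ = (|d| ^ (2:ℕ) : ℝ) ^ γ * I ^ γ :=
      Real.mul_rpow (by positivity) hI0
    rw [e2]
    have e3 : ((|d| ^ (2:ℕ) : ℝ)) ^ γ = |d| ^ ((2:ℝ) * γ) := by
      rw [← Real.rpow_natCast |d| 2, ← Real.rpow_mul (abs_nonneg d)]
      norm_num
    rw [e3]
    have e4 : |d| ^ (1 - 2 * γ) * |d| ^ ((2:ℝ) * γ) = |d| := by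
      rw [← Real.rpow_add hdpos]
      norm_num
    calc M * ((1 - γ) / (2 - γ)) ^ (1 - γ) * |d| ^ (1 - 2 * γ) * (|d| ^ ((2:ℝ) * γ) * I ^ γ)
        = M * ((1 - γ) / (2 - γ)) ^ (1 - γ) * (|d| ^ (1 - 2 * γ) * |d| ^ ((2:ℝ) * γ)) * I ^ γ := by
          ring
      _ = (M * |d|) * ((1 - γ) / (2 - γ)) ^ (1 - γ) * I ^ γ := by rw [e4]; ring
  rw [hLHS, hrhs]
  exact main
end

section
/- Let φ: ℝ → ℝ be C² with φ'(y) ≥ 0 for all y, and suppose there exist r > 1 and M ≥ 0 such that |φ''(y)| ≤ M (φ'(y))^(1/r) for all y. Then φ satisfies: for all y₁ ≠ y₂, |(φ'(y₂) − φ'(y₁))/(y₂ − y₁)| ≤ M ((φ(y₂) − φ(y₁))/(y₂ − y₁))^(1/r). -/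
open MeasureTheory intervalIntegral Set

theorem stmt_5 (φ : ℝ → ℝ) (hφ : ContDiff ℝ 2 φ) (hpos : ∀ y, 0 ≤ deriv φ y)
    (r M : ℝ) (hr : 1 < r) (hM : 0 ≤ M)
    (hgrowth : ∀ y : ℝ, |deriv (deriv φ) y| ≤ M * (deriv φ y) ^ (1 / r)) :
    ∀ y₁ y₂ : ℝ, y₁ ≠ y₂ →
      |(deriv φ y₂ - deriv φ y₁) / (y₂ - y₁)| ≤
        M * ((φ y₂ - φ y₁) / (y₂ - y₁)) ^ (1 / r) := by
  have hr0 : (0:ℝ) < r := lt_trans one_pos hr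
  have h1r : 0 < 1/r := by positivity
  have hdiff : Differentiable ℝ φ := hφ.differentiable (by norm_num)
  have hcd1 : ContDiff ℝ 1 (deriv φ) := by
    have h2 : ContDiff ℝ ((1:ℕ)+1) φ := by exact_mod_cast hφ
    exact (contDiff_succ_iff_deriv.mp h2).2.2
  have hc1 : Continuous (deriv φ) := hcd1.continuous
  have hdd : Differentiable ℝ (deriv φ) := hcd1.differentiable (by norm_num)
  have hc2 : Continuous (deriv (deriv φ)) := hcd1.continuous_deriv le_rfl
  have hg_cont : Continuous (fun x => (deriv φ x) ^ (1/r)) :=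
    (Real.continuous_rpow_const h1r.le).comp hc1
  have hmono : Monotone φ := by
    exact monotone_of_deriv_nonneg hdiff hpos
  -- key inequality for a < b
  have key : ∀ a b : ℝ, a < b →
      |deriv φ b - deriv φ a| ≤ M * (b - a) ^ (1 - 1/r) * (φ b - φ a) ^ (1/r) := by
    intro a b hab
    have hab' : a ≤ b := hab.le
    have hFTC2 : deriv φ b - deriv φ a = ∫ x in a..b, deriv (deriv φ) x :=
      (integral_deriv_eq_sub (fun x _ => (hdd x)) (hc2.intervalIntegrable a b)).symm
    have hFTC1 : φ b - φ a = ∫ x in a..b, deriv φ x :=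
      (integral_deriv_eq_sub (fun x _ => (hdiff x)) (hc1.intervalIntegrable a b)).symm
    have step1 : |deriv φ b - deriv φ a| ≤ ∫ x in a..b, |deriv (deriv φ) x| := by
      rw [hFTC2]; exact intervalIntegral.abs_integral_le_integral_abs hab'
    have step2 : (∫ x in a..b, |deriv (deriv φ) x|) ≤ ∫ x in a..b, M * (deriv φ x) ^ (1/r) := by
      apply intervalIntegral.integral_mono_on hab'
      · exact (hc2.abs).intervalIntegrable a b
      · exact (continuous_const.mul hg_cont).intervalIntegrable a b
      · intro x _; exact hgrowth x
    -- Hölder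
    set μ : Measure ℝ := volume.restrict (Ioc a b) with hμ
    haveI : IsFiniteMeasure μ := by
      constructor
      rw [hμ, Measure.restrict_apply_univ, Real.volume_Ioc]
      exact ENNReal.ofReal_lt_top
    have hpq : (r/(r-1)).HolderConjugate r := (Real.HolderConjugate.conjExponent hr).symm
    have hf : MemLp (fun _ : ℝ => (1:ℝ)) (ENNReal.ofReal (r/(r-1))) μ := memLp_const 1
    have hg : MemLp (fun x => (deriv φ x) ^ (1/r)) (ENNReal.ofReal r) μ := by
      obtain ⟨C, hC⟩ := (isCompact_Icc (a := a) (b := b)).exists_bound_of_continuousOn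
        hg_cont.continuousOn
      apply MemLp.of_bound hg_cont.aestronglyMeasurable C
      filter_upwards [ae_restrict_mem measurableSet_Ioc] with x hx
      exact hC x (Ioc_subset_Icc_self hx)
    have holder := integral_mul_le_Lp_mul_Lq_of_nonneg hpq
      (ae_of_all μ (fun x => zero_le_one)) (ae_of_all μ (fun x => Real.rpow_nonneg (hpos x) _))
      hf hg
    simp only [one_mul, Real.one_rpow] at holder
    have e1 : (∫ _ : ℝ, (1:ℝ) ∂μ) = b - a := by
      rw [MeasureTheory.integral_const, hμ, Measure.real, Measure.restrict_apply_univ, Real.volume_Ioc, smul_eq_mul,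
        mul_one, ENNReal.toReal_ofReal (by linarith)]
    have e2 : ∀ x : ℝ, ((deriv φ x) ^ (1/r)) ^ r = deriv φ x := by
      intro x
      rw [← Real.rpow_mul (hpos x), one_div, inv_mul_cancel₀ hr0.ne', Real.rpow_one]
    have e3 : (∫ x, ((deriv φ x) ^ (1/r)) ^ r ∂μ) = φ b - φ a := by
      simp_rw [e2]
      rw [hμ, ← intervalIntegral.integral_of_le hab', ← hFTC1]
    have e4 : (∫ x, (deriv φ x) ^ (1/r) ∂μ) = ∫ x in a..b, (deriv φ x) ^ (1/r) := by
      rw [hμ, intervalIntegral.integral_of_le hab']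
    rw [e1, e3, e4] at holder
    have e5 : (b - a) ^ (1/(r/(r-1))) = (b - a) ^ (1 - 1/r) := by
      congr 1
      field_simp
    rw [e5] at holder
    calc |deriv φ b - deriv φ a| ≤ ∫ x in a..b, M * (deriv φ x) ^ (1/r) := step1.trans step2
      _ = M * ∫ x in a..b, (deriv φ x) ^ (1/r) := intervalIntegral.integral_const_mul _ _
      _ ≤ M * ((b - a) ^ (1 - 1/r) * (φ b - φ a) ^ (1/r)) := by
          exact mul_le_mul_of_nonneg_left holder hM
      _ = M * (b - a) ^ (1 - 1/r) * (φ b - φ a) ^ (1/r) := by ring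
  -- reduce to the ordered case
  have main : ∀ a b : ℝ, a < b →
      |(deriv φ b - deriv φ a) / (b - a)| ≤ M * ((φ b - φ a) / (b - a)) ^ (1/r) := by
    intro a b hab
    have hba : 0 < b - a := sub_pos.mpr hab
    have hΔ : 0 ≤ φ b - φ a := sub_nonneg.mpr (hmono hab.le)
    rw [abs_div, abs_of_pos hba, div_le_iff₀ hba]
    have : M * ((φ b - φ a) / (b - a)) ^ (1/r) * (b - a)
        = M * (b - a) ^ (1 - 1/r) * (φ b - φ a) ^ (1/r) := by
      rw [Real.div_rpow hΔ hba.le, Real.rpow_sub hba, Real.rpow_one]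
      field_simp
    rw [this]
    exact key a b hab
  intro y₁ y₂ hne
  rcases lt_or_gt_of_ne hne with h | h
  · exact main y₁ y₂ h
  · have e : (deriv φ y₂ - deriv φ y₁) / (y₂ - y₁) = (deriv φ y₁ - deriv φ y₂) / (y₁ - y₂) := by
      rw [← neg_div_neg_eq]; ring_nf
    have e' : (φ y₂ - φ y₁) / (y₂ - y₁) = (φ y₁ - φ y₂) / (y₁ - y₂) := by
      rw [← neg_div_neg_eq]; ring_nf
    rw [e, e']
    exact main y₂ y₁ h
end
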